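/- arXiv:1202.0757 — 5 statements merged into one kernel-verified Lean document; each statement's English description precedes it below -/
import Mathlib

section
/- Let Ω be an open subset of ℝ^P and let F : Ω → ℝ^{M×N} be entrywise C¹ with the columns of F(x) spanning ℝ^M for every x ∈ Ω. Define Π(x) := I − Fᵀ(x)(F(x)Fᵀ(x))⁻¹F(x) and Π_p(x) := Fᵀ(x)(F(x)Fᵀ(x))⁻¹ (∂F/∂x_p)(x). Then for every p = 1,…,P and every x ∈ Ω, ∂Π/∂x_p(x) = −Π(x)Π_p(x)ᵀ − Π_p(x)Π(x). -/
open Matrix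

/-- Entrywise partial derivative of a matrix-valued function with respect to the `p`-th
coordinate. -/
noncomputable def matPartialDeriv {P M N : ℕ} (F : (Fin P → ℝ) → Matrix (Fin M) (Fin N) ℝ)
    (p : Fin P) (x : Fin P → ℝ) : Matrix (Fin M) (Fin N) ℝ :=
  Matrix.of fun i j => fderiv ℝ (fun y => F y i j) x (Pi.single p 1)

/-- `Π(x) := I − Fᵀ(x)(F(x)Fᵀ(x))⁻¹F(x)`. -/
noncomputable def projMat {P M N : ℕ} (F : (Fin P → ℝ) → Matrix (Fin M) (Fin N) ℝ)
    (x : Fin P → ℝ) : Matrix (Fin N) (Fin N) ℝ :=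
  1 - (F x)ᵀ * (F x * (F x)ᵀ)⁻¹ * F x

/-- `Π_p(x) := Fᵀ(x)(F(x)Fᵀ(x))⁻¹ (∂F/∂x_p)(x)`. -/
noncomputable def projMatP {P M N : ℕ} (F : (Fin P → ℝ) → Matrix (Fin M) (Fin N) ℝ)
    (p : Fin P) (x : Fin P → ℝ) : Matrix (Fin N) (Fin N) ℝ :=
  (F x)ᵀ * (F x * (F x)ᵀ)⁻¹ * matPartialDeriv F p x

/-!
Write `Π = 1 - Q` with `Q = Fᵀ G⁻¹ F` and `G = F Fᵀ`; `G(x)` is invertible because `F(x)` has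
full row rank, so `G⁻¹` is differentiable with `∂G⁻¹ = -G⁻¹ (∂G) G⁻¹`, obtained by
differentiating `G⁻¹ G = 1`. The Leibniz rule then gives `∂Q`, and since `G⁻¹` is symmetric the
result regroups as `Π Π_pᵀ + Π_p Π`.
-/

section EntrywiseCalculus

variable {P : ℕ} {x : Fin P → ℝ}

def EntrywiseDifferentiableAt {m n : ℕ} (A : (Fin P → ℝ) → Matrix (Fin m) (Fin n) ℝ)
    (x : Fin P → ℝ) : Prop :=
  ∀ i j, DifferentiableAt ℝ (fun y => A y i j) x

namespace EntrywiseDifferentiableAt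

variable {l m n : ℕ}

theorem transpose {A : (Fin P → ℝ) → Matrix (Fin m) (Fin n) ℝ}
    (hA : EntrywiseDifferentiableAt A x) : EntrywiseDifferentiableAt (fun y => (A y)ᵀ) x :=
  fun i j => hA j i

theorem mul {A : (Fin P → ℝ) → Matrix (Fin l) (Fin m) ℝ}
    {B : (Fin P → ℝ) → Matrix (Fin m) (Fin n) ℝ}
    (hA : EntrywiseDifferentiableAt A x) (hB : EntrywiseDifferentiableAt B x) :
    EntrywiseDifferentiableAt (fun y => A y * B y) x := fun i j => by
  simp only [mul_apply]
  exact DifferentiableAt.fun_sum fun k _ => (hA i k).mul (hB k j)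

theorem det {A : (Fin P → ℝ) → Matrix (Fin n) (Fin n) ℝ}
    (hA : EntrywiseDifferentiableAt A x) : DifferentiableAt ℝ (fun y => (A y).det) x := by
  simp only [det_apply']
  exact DifferentiableAt.fun_sum fun σ _ =>
    (HasFDerivAt.finsetProd fun i _ => (hA (σ i) i).hasFDerivAt).differentiableAt.const_mul _

/-- Cramer's rule: the entries of `A⁻¹` are `det⁻¹` times cofactors. -/
theorem inv {A : (Fin P → ℝ) → Matrix (Fin n) (Fin n) ℝ}
    (hA : EntrywiseDifferentiableAt A x) (hdet : IsUnit (A x).det) :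
    EntrywiseDifferentiableAt (fun y => (A y)⁻¹) x := fun i j => by
  simp only [inv_def, Ring.inverse_eq_inv, Matrix.smul_apply, smul_eq_mul, adjugate_apply]
  refine (hA.det.inv hdet.ne_zero).mul (det fun k l => ?_)
  by_cases hk : k = j <;> simp [updateRow_apply, hk, hA k l]

end EntrywiseDifferentiableAt

variable (p : Fin P)

theorem Filter.EventuallyEq.matPartialDeriv_eq {m n : ℕ}
    {A B : (Fin P → ℝ) → Matrix (Fin m) (Fin n) ℝ} (h : A =ᶠ[nhds x] B) :
    matPartialDeriv A p x = matPartialDeriv B p x := by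
  ext i j
  simp only [matPartialDeriv, of_apply]
  rw [Filter.EventuallyEq.fderiv_eq (h.mono fun y hy => by rw [hy])]

theorem matPartialDeriv_const {m n : ℕ} (C : Matrix (Fin m) (Fin n) ℝ) :
    matPartialDeriv (fun _ => C) p x = 0 := by
  ext i j
  simp [matPartialDeriv]

theorem matPartialDeriv_const_sub {m n : ℕ} (C : Matrix (Fin m) (Fin n) ℝ)
    (A : (Fin P → ℝ) → Matrix (Fin m) (Fin n) ℝ) :
    matPartialDeriv (fun y => C - A y) p x = -matPartialDeriv A p x := by
  ext i j
  simp [matPartialDeriv, fderiv_const_sub]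

theorem matPartialDeriv_transpose {m n : ℕ} (A : (Fin P → ℝ) → Matrix (Fin m) (Fin n) ℝ) :
    matPartialDeriv (fun y => (A y)ᵀ) p x = (matPartialDeriv A p x)ᵀ := by
  ext i j
  simp [matPartialDeriv]

theorem matPartialDeriv_mul {l m n : ℕ} {A : (Fin P → ℝ) → Matrix (Fin l) (Fin m) ℝ}
    {B : (Fin P → ℝ) → Matrix (Fin m) (Fin n) ℝ}
    (hA : EntrywiseDifferentiableAt A x) (hB : EntrywiseDifferentiableAt B x) :
    matPartialDeriv (fun y => A y * B y) p x
      = matPartialDeriv A p x * B x + A x * matPartialDeriv B p x := by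
  ext i j
  simp only [matPartialDeriv, of_apply, Matrix.add_apply, mul_apply]
  rw [(HasFDerivAt.fun_sum (A := fun k y => A y i k * B y k j) fun k _ =>
    (hA i k).hasFDerivAt.mul (hB k j).hasFDerivAt).fderiv]
  simp only [FunLike.coe_sum, Finset.sum_apply, _root_.add_apply, FunLike.coe_smul,
    Pi.smul_apply, smul_eq_mul, Finset.sum_add_distrib, mul_comm, add_comm]

/-- `A⁻¹ A = 1` near `x` since `det` is continuous; differentiate it. -/
theorem matPartialDeriv_inv {n : ℕ} {A : (Fin P → ℝ) → Matrix (Fin n) (Fin n) ℝ}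
    (hA : EntrywiseDifferentiableAt A x) (hdet : IsUnit (A x).det) :
    matPartialDeriv (fun y => (A y)⁻¹) p x = -((A x)⁻¹ * matPartialDeriv A p x * (A x)⁻¹) := by
  have hlocal : (fun y => (A y)⁻¹ * A y) =ᶠ[nhds x] fun _ => 1 := by
    filter_upwards [hA.det.continuousAt.eventually_ne hdet.ne_zero] with y hy
    exact nonsing_inv_mul _ (Ne.isUnit hy)
  have hzero := hlocal.matPartialDeriv_eq p
  rw [matPartialDeriv_const, matPartialDeriv_mul p (hA.inv hdet) hA] at hzero
  have hright := congrArg (· * (A x)⁻¹) hzero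
  simp only [add_mul, Matrix.mul_assoc, mul_nonsing_inv _ hdet, Matrix.mul_one,
    Matrix.zero_mul] at hright
  rw [eq_neg_of_add_eq_zero_left hright, Matrix.mul_assoc]

end EntrywiseCalculus

theorem isUnit_mul_transpose_of_span_col_eq_top {R : Type*} [Field R] [LinearOrder R]
    [IsStrictOrderedRing R] {m n : Type*} [Fintype m] [Fintype n] [DecidableEq m]
    (A : Matrix m n R) (h : Submodule.span R (Set.range A.col) = ⊤) : IsUnit (A * Aᵀ) := by
  rw [← mulVec_surjective_iff_isUnit, ← coe_mulVecLin, ← LinearMap.range_eq_top]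
  refine Submodule.eq_top_of_finrank_eq ?_
  rw [← rank, rank_self_mul_transpose, rank_eq_finrank_span_cols, h, finrank_top]

/-- The left side is the Leibniz-rule derivative of `Aᵀ H A` when `A` moves in direction `B`
and `H` in direction `-H (B Aᵀ + A Bᵀ) H`, i.e. when `H = (A Aᵀ)⁻¹`. -/
theorem leibniz_transpose_mul_mul_eq {R : Type*} [CommRing R] {m n : Type*} [Fintype m]
    [Fintype n] [DecidableEq n] (A B : Matrix m n R) {H : Matrix m m R} (hH : H.IsSymm) :
    (Bᵀ * H + Aᵀ * -(H * (B * Aᵀ + A * Bᵀ) * H)) * A + Aᵀ * H * B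
      = (1 - Aᵀ * H * A) * (Aᵀ * H * B)ᵀ + Aᵀ * H * B * (1 - Aᵀ * H * A) := by
  simp only [transpose_mul, transpose_transpose, hH.eq, Matrix.mul_add, Matrix.add_mul,
    Matrix.mul_sub, Matrix.sub_mul, Matrix.mul_one, Matrix.one_mul, Matrix.neg_mul, Matrix.mul_neg,
    Matrix.mul_assoc]
  abel

/-- If `F : Ω → ℝ^{M×N}` is entrywise `C¹` on an open `Ω ⊆ ℝ^P` with the
columns of `F(x)` spanning `ℝ^M` for all `x ∈ Ω`, then
`∂Π/∂x_p(x) = −Π(x)Π_p(x)ᵀ − Π_p(x)Π(x)` for every `p` and `x ∈ Ω`. -/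
theorem stmt4 {P M N : ℕ} {Ω : Set (Fin P → ℝ)} (hΩ : IsOpen Ω)
    (F : (Fin P → ℝ) → Matrix (Fin M) (Fin N) ℝ)
    (hF : ∀ i j, ContDiffOn ℝ 1 (fun x => F x i j) Ω)
    (hspan : ∀ x ∈ Ω,
      Submodule.span ℝ (Set.range (fun n : Fin N => fun m : Fin M => F x m n)) = ⊤) :
    ∀ x ∈ Ω, ∀ p : Fin P,
      matPartialDeriv (projMat F) p x
        = -(projMat F x * (projMatP F p x)ᵀ) - projMatP F p x * projMat F x := by
  intro x hx p
  have hFd : EntrywiseDifferentiableAt F x := fun i j =>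
    ((hF i j).differentiableOn one_ne_zero x hx).differentiableAt (hΩ.mem_nhds hx)
  have hGd := hFd.mul hFd.transpose
  have hdet : IsUnit (F x * (F x)ᵀ).det :=
    (isUnit_iff_isUnit_det _).mp (isUnit_mul_transpose_of_span_col_eq_top (F x) (hspan x hx))
  have hsymm : (F x * (F x)ᵀ)⁻¹.IsSymm := IsSymm.inv (by simp [IsSymm, transpose_mul])
  calc matPartialDeriv (projMat F) p x
      = -matPartialDeriv (fun y => (F y)ᵀ * (F y * (F y)ᵀ)⁻¹ * F y) p x :=
        matPartialDeriv_const_sub p 1 _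
    _ = -(projMat F x * (projMatP F p x)ᵀ + projMatP F p x * projMat F x) := by
        rw [matPartialDeriv_mul p (hFd.transpose.mul (hGd.inv hdet)) hFd,
          matPartialDeriv_mul p hFd.transpose (hGd.inv hdet), matPartialDeriv_inv p hGd hdet,
          matPartialDeriv_mul p hFd hFd.transpose, matPartialDeriv_transpose,
          leibniz_transpose_mul_mul_eq _ _ hsymm]
        rfl
    _ = _ := neg_add _ _
end

section
/- Let Ω be an open subset of ℝ^P, let F : Ω → ℝ^{M×N} be entrywise C² with the columns of F(x) spanning ℝ^M for every x ∈ Ω, and let w ∈ ℝ^N. Define E(x) := ‖Π(x)w‖² where Π(x) := I − Fᵀ(x)(F(x)Fᵀ(x))⁻¹F(x), and Π_p(x) := Fᵀ(x)(F(x)Fᵀ(x))⁻¹ (∂F/∂x_p)(x). Then for every p = 1,…,P and every x ∈ Ω, the first partial derivative of E is ∂E/∂x_p(x) = −2⟨w, Π_p(x)Π(x)w⟩. -/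
/-! Write `Π w = w - Fᵀ b` with `b = (F Fᵀ)⁻¹ F w` and differentiate `‖Π w‖²` along the line
`s ↦ x + s eₚ`: the derivative is `-2 ⟨Π w, (∂ₚF)ᵀ b + Fᵀ ∂ₚb⟩`. Since `F Π = 0`, the term
containing the derivative of `b` vanishes, so `b` only has to be differentiable (Cramer's rule),
and the symmetry of `(F Fᵀ)⁻¹` turns `⟨Π w, (∂ₚF)ᵀ b⟩` into `⟨w, Π_p Π w⟩`. -/

open Matrix

namespace Matrix

section Algebra

variable {m n R : Type*} [Fintype m] [Fintype n] [DecidableEq m] [CommRing R]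

theorem transpose_inv_mul_transpose_self (A : Matrix m n R) : (A * Aᵀ)⁻¹ᵀ = (A * Aᵀ)⁻¹ := by
  rw [transpose_nonsing_inv, transpose_mul, transpose_transpose]

variable [DecidableEq n]

noncomputable def nullSpaceProj (A : Matrix m n R) : Matrix n n R :=
  1 - Aᵀ * (A * Aᵀ)⁻¹ * A

theorem nullSpaceProj_mulVec (A : Matrix m n R) (v : n → R) :
    A.nullSpaceProj *ᵥ v = v - Aᵀ *ᵥ ((A * Aᵀ)⁻¹ *ᵥ (A *ᵥ v)) := by
  simp only [nullSpaceProj, sub_mulVec, one_mulVec, mulVec_mulVec, Matrix.mul_assoc]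

theorem mul_nullSpaceProj {A : Matrix m n R} (hA : IsUnit (A * Aᵀ)) : A * A.nullSpaceProj = 0 := by
  have h : A * Aᵀ * (A * Aᵀ)⁻¹ = 1 := mul_nonsing_inv _ ((isUnit_iff_isUnit_det _).1 hA)
  rw [nullSpaceProj, Matrix.mul_sub, Matrix.mul_one, ← Matrix.mul_assoc, ← Matrix.mul_assoc, h,
    Matrix.one_mul, sub_self]

theorem nullSpaceProj_mulVec_dotProduct_transpose_add {A : Matrix m n R} (hA : IsUnit (A * Aᵀ))
    (A' : Matrix m n R) (w : n → R) (c : m → R) :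
    (A.nullSpaceProj *ᵥ w) ⬝ᵥ (A'ᵀ *ᵥ ((A * Aᵀ)⁻¹ *ᵥ (A *ᵥ w)) + Aᵀ *ᵥ c) =
      w ⬝ᵥ ((Aᵀ * (A * Aᵀ)⁻¹ * A') *ᵥ (A.nullSpaceProj *ᵥ w)) := by
  set r := A.nullSpaceProj *ᵥ w
  have hAr : A *ᵥ r = 0 := by rw [mulVec_mulVec, mul_nullSpaceProj hA, zero_mulVec]
  have hker : r ⬝ᵥ (Aᵀ *ᵥ c) = 0 := by
    rw [dotProduct_mulVec, vecMul_transpose, hAr, zero_dotProduct]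
  have hsymm : r ⬝ᵥ (A'ᵀ *ᵥ ((A * Aᵀ)⁻¹ *ᵥ (A *ᵥ w))) =
      (A *ᵥ w) ⬝ᵥ ((A * Aᵀ)⁻¹ *ᵥ (A' *ᵥ r)) := by
    rw [dotProduct_mulVec r, vecMul_transpose, dotProduct_mulVec (A *ᵥ w), ← mulVec_transpose,
      transpose_inv_mul_transpose_self, dotProduct_comm]
  rw [dotProduct_add, hker, add_zero, hsymm, ← mulVec_mulVec, ← mulVec_mulVec, dotProduct_mulVec w,
    vecMul_transpose]

end Algebra

section Rank

variable {m n R : Type*} [Fintype m] [Fintype n] [DecidableEq m] [Field R] [LinearOrder R]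
  [IsStrictOrderedRing R]

theorem isUnit_mul_transpose_of_span_col_eq_top {A : Matrix m n R}
    (h : Submodule.span R (Set.range A.col) = ⊤) : IsUnit (A * Aᵀ) := by
  rw [← mulVec_surjective_iff_isUnit, ← coe_mulVecLin, ← LinearMap.range_eq_top]
  apply Submodule.eq_top_of_finrank_eq
  rw [← rank, rank_self_mul_transpose, rank_eq_finrank_span_cols, h, finrank_top]

end Rank

end Matrix

section Calculus

variable {𝕜 E : Type*} [NontriviallyNormedField 𝕜] [NormedAddCommGroup E] [NormedSpace 𝕜 E]
  {m n : Type*} [Fintype n]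

section Differentiable

variable {x : E}

theorem DifferentiableAt.dotProduct {u v : E → n → 𝕜} (hu : DifferentiableAt 𝕜 u x)
    (hv : DifferentiableAt 𝕜 v x) : DifferentiableAt 𝕜 (fun y => u y ⬝ᵥ v y) x := by
  have := differentiableAt_pi.1 hu
  have := differentiableAt_pi.1 hv
  show DifferentiableAt 𝕜 (fun y => ∑ i, u y i * v y i) x
  fun_prop

theorem DifferentiableAt.matrix_mulVec {A : E → Matrix m n 𝕜} {v : E → n → 𝕜}
    (hA : ∀ i j, DifferentiableAt 𝕜 (fun y => A y i j) x) (hv : DifferentiableAt 𝕜 v x) :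
    DifferentiableAt 𝕜 (fun y => A y *ᵥ v y) x :=
  differentiableAt_pi.2 fun i => (differentiableAt_pi.2 (hA i)).dotProduct hv

theorem DifferentiableAt.matrix_det [DecidableEq n] {A : E → Matrix n n 𝕜}
    (hA : ∀ i j, DifferentiableAt 𝕜 (fun y => A y i j) x) :
    DifferentiableAt 𝕜 (fun y => (A y).det) x := by
  simp only [det_apply']
  fun_prop

theorem DifferentiableAt.matrix_inv_mulVec [DecidableEq n] {A : E → Matrix n n 𝕜}
    {v : E → n → 𝕜} (hA : ∀ i j, DifferentiableAt 𝕜 (fun y => A y i j) x)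
    (hv : DifferentiableAt 𝕜 v x) (hdet : (A x).det ≠ 0) :
    DifferentiableAt 𝕜 (fun y => (A y)⁻¹ *ᵥ v y) x := by
  simp only [inv_def, smul_mulVec, ← cramer_eq_adjugate_mulVec, Ring.inverse_eq_inv']
  refine differentiableAt_pi.2 fun i => ?_
  simp only [Pi.smul_apply, smul_eq_mul, cramer_apply]
  refine ((DifferentiableAt.matrix_det hA).inv hdet).mul (DifferentiableAt.matrix_det fun k j => ?_)
  by_cases hj : j = i
  · subst hj; simpa using differentiableAt_pi.1 hv k
  · simpa [updateCol_apply, hj] using hA k j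

variable [Fintype m] [DecidableEq m]

theorem DifferentiableAt.mul_transpose_inv_mulVec_mulVec {A : E → Matrix m n 𝕜}
    (hA : ∀ i j, DifferentiableAt 𝕜 (fun y => A y i j) x) (hAx : IsUnit (A x * (A x)ᵀ))
    (w : n → 𝕜) : DifferentiableAt 𝕜 (fun y => (A y * (A y)ᵀ)⁻¹ *ᵥ (A y *ᵥ w)) x :=
  DifferentiableAt.matrix_inv_mulVec
    (fun i j => (differentiableAt_pi.2 (hA i)).dotProduct (differentiableAt_pi.2 (hA j)))
    (DifferentiableAt.matrix_mulVec hA (differentiableAt_const w))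
    (isUnit_iff_ne_zero.1 ((isUnit_iff_isUnit_det _).1 hAx))

theorem DifferentiableAt.nullSpaceProj_mulVec [DecidableEq n] {A : E → Matrix m n 𝕜}
    (hA : ∀ i j, DifferentiableAt 𝕜 (fun y => A y i j) x) (hAx : IsUnit (A x * (A x)ᵀ))
    (w : n → 𝕜) : DifferentiableAt 𝕜 (fun y => (A y).nullSpaceProj *ᵥ w) x := by
  simp only [Matrix.nullSpaceProj_mulVec]
  exact (differentiableAt_const w).sub (DifferentiableAt.matrix_mulVec (fun i j => hA j i)
    (.mul_transpose_inv_mulVec_mulVec hA hAx w))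

end Differentiable

section Curve

variable {t : 𝕜}

theorem HasDerivAt.dotProduct {u v : 𝕜 → n → 𝕜} {u' v' : n → 𝕜} (hu : HasDerivAt u u' t)
    (hv : HasDerivAt v v' t) : HasDerivAt (fun s => u s ⬝ᵥ v s) (u' ⬝ᵥ v t + u t ⬝ᵥ v') t := by
  rw [show u' ⬝ᵥ v t + u t ⬝ᵥ v' = ∑ i, (u' i * v t i + u t i * v' i) from
    Finset.sum_add_distrib.symm]
  exact HasDerivAt.fun_sum fun i _ => (hasDerivAt_pi.1 hu i).mul (hasDerivAt_pi.1 hv i)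

theorem HasDerivAt.matrix_mulVec {A : 𝕜 → Matrix m n 𝕜} {A' : Matrix m n 𝕜} {v : 𝕜 → n → 𝕜}
    {v' : n → 𝕜} (hA : ∀ i j, HasDerivAt (fun s => A s i j) (A' i j) t) (hv : HasDerivAt v v' t) :
    HasDerivAt (fun s => A s *ᵥ v s) (A' *ᵥ v t + A t *ᵥ v') t :=
  hasDerivAt_pi.2 fun i => (hasDerivAt_pi.2 (hA i)).dotProduct hv

variable [Fintype m] [DecidableEq m] [DecidableEq n]

theorem hasDerivAt_nullSpaceProj_mulVec_dotProduct_self {A : 𝕜 → Matrix m n 𝕜}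
    {A' : Matrix m n 𝕜} (hA : ∀ i j, HasDerivAt (fun s => A s i j) (A' i j) t)
    (hAt : IsUnit (A t * (A t)ᵀ)) (w : n → 𝕜) :
    HasDerivAt (fun s => ((A s).nullSpaceProj *ᵥ w) ⬝ᵥ ((A s).nullSpaceProj *ᵥ w))
      (-2 * (w ⬝ᵥ (((A t)ᵀ * (A t * (A t)ᵀ)⁻¹ * A') *ᵥ ((A t).nullSpaceProj *ᵥ w)))) t := by
  set b := fun s => (A s * (A s)ᵀ)⁻¹ *ᵥ (A s *ᵥ w)
  have hb : HasDerivAt b (deriv b t) t :=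
    (DifferentiableAt.mul_transpose_inv_mulVec_mulVec (fun i j => (hA i j).differentiableAt)
      hAt w).hasDerivAt
  have hr : HasDerivAt (fun s => (A s).nullSpaceProj *ᵥ w)
      (-(A'ᵀ *ᵥ b t + (A t)ᵀ *ᵥ deriv b t)) t := by
    simp only [nullSpaceProj_mulVec]
    exact (HasDerivAt.matrix_mulVec (fun i j => hA j i) hb).const_sub w
  convert hr.dotProduct hr using 1
  rw [neg_dotProduct, dotProduct_neg, dotProduct_comm _ ((A t).nullSpaceProj *ᵥ w),
    nullSpaceProj_mulVec_dotProduct_transpose_add hAt]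
  ring

end Curve

end Calculus

/-- If `F : Ω → ℝ^{M×N}` is entrywise `C²` on an open `Ω ⊆ ℝ^P` with the
columns of `F(x)` spanning `ℝ^M` for all `x ∈ Ω`, and `w ∈ ℝ^N`, then the error function
`E(x) := ‖Π(x)w‖²` (squared Euclidean norm via the dot product) has first partial
derivatives `∂E/∂x_p(x) = −2⟨w, Π_p(x)Π(x)w⟩` for every `p` and `x ∈ Ω`. -/
theorem stmt6 {P M N : ℕ} {Ω : Set (Fin P → ℝ)} (hΩ : IsOpen Ω)
    (F : (Fin P → ℝ) → Matrix (Fin M) (Fin N) ℝ)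
    (hF : ∀ i j, ContDiffOn ℝ 2 (fun x => F x i j) Ω)
    (hspan : ∀ x ∈ Ω,
      Submodule.span ℝ (Set.range (fun n : Fin N => fun m : Fin M => F x m n)) = ⊤)
    (w : Fin N → ℝ) :
    ∀ x ∈ Ω, ∀ p : Fin P,
      fderiv ℝ (fun y => (projMat F y *ᵥ w) ⬝ᵥ (projMat F y *ᵥ w)) x (Pi.single p 1)
        = -2 * (w ⬝ᵥ (projMatP F p x *ᵥ (projMat F x *ᵥ w))) := by
  intro x hx p
  have hFx : ∀ i j, DifferentiableAt ℝ (fun y => F y i j) x := fun i j =>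
    ((hF i j).contDiffAt (hΩ.mem_nhds hx)).differentiableAt (by norm_num)
  have hG : IsUnit (F x * (F x)ᵀ) := isUnit_mul_transpose_of_span_col_eq_top (hspan x hx)
  have hline : HasLineDerivAt ℝ (fun y => (projMat F y *ᵥ w) ⬝ᵥ (projMat F y *ᵥ w))
      (-2 * (w ⬝ᵥ (projMatP F p x *ᵥ (projMat F x *ᵥ w)))) x (Pi.single p 1) := by
    have := hasDerivAt_nullSpaceProj_mulVec_dotProduct_self
      (A := fun s => F (x + s • Pi.single p 1)) (A' := matPartialDeriv F p x) (t := 0)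
      (fun i j => (hFx i j).hasFDerivAt.hasLineDerivAt (Pi.single p 1)) (by simpa using hG) w
    simp only [zero_smul, add_zero] at this
    -- `projMat F y` is `(F y).nullSpaceProj` by definition, and `projMatP` unfolds likewise
    exact this
  have hE := (DifferentiableAt.nullSpaceProj_mulVec hFx hG w).dotProduct
    (DifferentiableAt.nullSpaceProj_mulVec hFx hG w)
  exact (hE.hasFDerivAt.hasLineDerivAt _).unique hline
end

section
/- For every nonzero x ∈ ℝ^M and all p, q = 1,…,M, the second partial derivative of the map x ↦ x/‖x‖ satisfies ∂²/∂x_q∂x_p (x/‖x‖) = −(1/‖x‖³)[π(x)(δ_pδ_qᵀ + δ_qδ_pᵀ) + (δ_pᵀπ(x)δ_q)I]x, where π(x) := I − xxᵀ/‖x‖² and δ_p is the p-th standard basis vector of ℝ^M. -/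
/-!
Restrict to the line `t ↦ x + t • v`. Since `x ≠ 0` is an open condition, the first directional
derivative `lineDeriv (z ↦ z / ‖z‖) y u = ‖y‖⁻¹ • u - ((y ⬝ᵥ u) / ‖y‖³) • y` holds for all `y` near
`x`, so the second derivative is obtained by differentiating this explicit formula along the line,
using `d/dt ‖x + t • v‖⁻ᵏ = -k (x ⬝ᵥ v) ‖x‖⁻ᵏ⁻²` at `t = 0`. Expanding `π(x) w = w - (x ⬝ᵥ w / ‖x‖²) x`
turns the matrix expression into the same vector.
-/

open Matrix

/-- `π(x) := I − xxᵀ/‖x‖²`, the orthogonal projection onto the orthogonal complement of the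
line through `x` (the squared Euclidean norm is written via the dot product). -/
noncomputable def linePerp {M : ℕ} (x : Fin M → ℝ) : Matrix (Fin M) (Fin M) ℝ :=
  1 - (x ⬝ᵥ x)⁻¹ • Matrix.vecMulVec x x

section Line

variable {n : Type*} [Fintype n] (x v : n → ℝ)

theorem hasDerivAt_add_smul (t : ℝ) : HasDerivAt (fun t : ℝ => x + t • v) v t := by
  simpa using ((hasDerivAt_id t).smul_const v).const_add x

theorem hasDerivAt_add_smul_dotProduct (w : n → ℝ) (t : ℝ) :
    HasDerivAt (fun t : ℝ => (x + t • v) ⬝ᵥ w) (v ⬝ᵥ w) t := by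
  simp only [add_dotProduct, smul_dotProduct, smul_eq_mul]
  simpa using ((hasDerivAt_id t).mul_const (v ⬝ᵥ w)).const_add (x ⬝ᵥ w)

theorem hasDerivAt_add_smul_dotProduct_self :
    HasDerivAt (fun t : ℝ => (x + t • v) ⬝ᵥ (x + t • v)) (2 * (x ⬝ᵥ v)) 0 := by
  have expand (t : ℝ) :
      (x + t • v) ⬝ᵥ (x + t • v) = x ⬝ᵥ x + t * (2 * (x ⬝ᵥ v)) + t ^ 2 * (v ⬝ᵥ v) := by
    simp only [dotProduct_add, add_dotProduct, dotProduct_smul, smul_dotProduct, smul_eq_mul,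
      dotProduct_comm v x]
    ring
  simp only [expand]
  simpa using (((hasDerivAt_id (0 : ℝ)).mul_const (2 * (x ⬝ᵥ v))).const_add (x ⬝ᵥ x)).fun_add
    ((hasDerivAt_pow 2 (0 : ℝ)).mul_const (v ⬝ᵥ v))

theorem hasDerivAt_inv_sqrt_dotProduct_pow (hx : x ≠ 0) (k : ℕ) :
    HasDerivAt (fun t : ℝ => (√((x + t • v) ⬝ᵥ (x + t • v)) ^ k)⁻¹)
      (-(k * (x ⬝ᵥ v)) * (√(x ⬝ᵥ x) ^ (k + 2))⁻¹) 0 := by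
  have hr : 0 < √(x ⬝ᵥ x) := Real.sqrt_pos.mpr (dotProduct_self_star_pos_iff.mpr hx)
  have := (((hasDerivAt_add_smul_dotProduct_self x v).sqrt (by simpa using hx)).fun_pow k).fun_inv
    (by simp [hr.ne'])
  refine this.congr_deriv ?_
  simp only [zero_smul, add_zero]
  rcases k with _ | k
  · simp
  · rw [Nat.add_sub_cancel]
    field_simp
    ring

theorem hasLineDerivAt_inv_sqrt_dotProduct_smul (hx : x ≠ 0) :
    HasLineDerivAt ℝ (fun z : n → ℝ => (√(z ⬝ᵥ z))⁻¹ • z)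
      ((√(x ⬝ᵥ x))⁻¹ • v - ((x ⬝ᵥ v) * (√(x ⬝ᵥ x) ^ 3)⁻¹) • x) x v := by
  have := (hasDerivAt_inv_sqrt_dotProduct_pow x v hx 1).fun_smul (hasDerivAt_add_smul x v 0)
  simp only [pow_one, zero_smul, add_zero] at this
  refine this.congr_deriv ?_
  module

theorem hasLineDerivAt_lineDeriv_inv_sqrt_dotProduct_smul (hx : x ≠ 0) (u : n → ℝ) :
    HasLineDerivAt ℝ (fun y : n → ℝ => lineDeriv ℝ (fun z : n → ℝ => (√(z ⬝ᵥ z))⁻¹ • z) y u)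
      (-(√(x ⬝ᵥ x) ^ 3)⁻¹ •
        ((x ⬝ᵥ v) • u + (x ⬝ᵥ u) • v + (u ⬝ᵥ v - 3 * (x ⬝ᵥ u) * (x ⬝ᵥ v) * (x ⬝ᵥ x)⁻¹) • x))
      x v := by
  have hne : ∀ᶠ t in nhds (0 : ℝ), x + t • v ≠ 0 :=
    (hasDerivAt_add_smul x v 0).continuousAt.eventually_ne (by simpa using hx)
  have hfirst : (fun t : ℝ => lineDeriv ℝ (fun z : n → ℝ => (√(z ⬝ᵥ z))⁻¹ • z) (x + t • v) u)
      =ᶠ[nhds 0] fun t => (√((x + t • v) ⬝ᵥ (x + t • v)) ^ 1)⁻¹ • u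
        - (((x + t • v) ⬝ᵥ u) * (√((x + t • v) ⬝ᵥ (x + t • v)) ^ 3)⁻¹) • (x + t • v) :=
    hne.mono fun t ht => by
      simpa using (hasLineDerivAt_inv_sqrt_dotProduct_smul (x + t • v) u ht).lineDeriv
  have hsecond := ((hasDerivAt_inv_sqrt_dotProduct_pow x v hx 1).smul_const u).fun_sub
    (((hasDerivAt_add_smul_dotProduct x v u 0).fun_mul
      (hasDerivAt_inv_sqrt_dotProduct_pow x v hx 3)).fun_smul (hasDerivAt_add_smul x v 0))
  refine (hsecond.congr_of_eventuallyEq hfirst).congr_deriv ?_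
  have hpos : 0 < x ⬝ᵥ x := dotProduct_self_star_pos_iff.mpr hx
  have hr : 0 < √(x ⬝ᵥ x) := Real.sqrt_pos.mpr hpos
  have hsq : (x ⬝ᵥ x)⁻¹ = (√(x ⬝ᵥ x) ^ 2)⁻¹ := by rw [Real.sq_sqrt hpos.le]
  simp only [zero_smul, add_zero, dotProduct_comm v u]
  rw [hsq]
  match_scalars <;> field_simp
  ring

end Line

theorem linePerp_mulVec {M : ℕ} (x w : Fin M → ℝ) :
    linePerp x *ᵥ w = w - ((x ⬝ᵥ x)⁻¹ * (x ⬝ᵥ w)) • x := by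
  rw [linePerp, sub_mulVec, one_mulVec, smul_mulVec, vecMulVec_mulVec, op_smul_eq_smul, smul_smul]

theorem linePerp_mul_add_smul_one_mulVec {M : ℕ} (x u v : Fin M → ℝ) :
    (linePerp x * (vecMulVec u v + vecMulVec v u) + (u ⬝ᵥ (linePerp x *ᵥ v)) • 1) *ᵥ x
      = (x ⬝ᵥ v) • u + (x ⬝ᵥ u) • v + (u ⬝ᵥ v - 3 * (x ⬝ᵥ u) * (x ⬝ᵥ v) * (x ⬝ᵥ x)⁻¹) • x := by
  simp only [add_mulVec, ← mulVec_mulVec, smul_mulVec, one_mulVec, vecMulVec_mulVec,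
    op_smul_eq_smul, mulVec_add, mulVec_smul, linePerp_mulVec, dotProduct_sub, dotProduct_smul,
    smul_eq_mul, dotProduct_comm u x, dotProduct_comm v x]
  module

/-- For every nonzero `x ∈ ℝ^M` and all `p, q = 1,…,M`, the second partial
derivative of the map `x ↦ x/‖x‖` (with `‖x‖ = √(x ⬝ᵥ x)` the Euclidean norm) satisfies
`∂²/∂x_q∂x_p (x/‖x‖) = −(1/‖x‖³)[π(x)(δ_pδ_qᵀ + δ_qδ_pᵀ) + (δ_pᵀπ(x)δ_q)I]x`. -/
theorem stmt9 {M : ℕ} (x : Fin M → ℝ) (hx : x ≠ 0) (p q : Fin M) :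
    HasLineDerivAt ℝ
      (fun y : Fin M → ℝ =>
        lineDeriv ℝ (fun z : Fin M → ℝ => (Real.sqrt (z ⬝ᵥ z))⁻¹ • z) y (Pi.single p 1))
      (-(Real.sqrt (x ⬝ᵥ x) ^ 3)⁻¹ •
        ((linePerp x *
            (Matrix.vecMulVec (Pi.single p 1) (Pi.single q 1)
              + Matrix.vecMulVec (Pi.single q 1) (Pi.single p 1))
          + ((Pi.single p 1 : Fin M → ℝ) ⬝ᵥ (linePerp x *ᵥ Pi.single q 1)) •
              (1 : Matrix (Fin M) (Fin M) ℝ)) *ᵥ x))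
      x (Pi.single q 1) := by
  rw [linePerp_mul_add_smul_one_mulVec]
  exact hasLineDerivAt_lineDeriv_inv_sqrt_dotProduct_smul x _ hx _
end

section
/- Let Ω be an open subset of ℝ^P, let F : Ω → ℝ^{M×N} be entrywise C¹ with columns f₁(x),…,f_N(x) spanning ℝ^M for every x ∈ Ω, and let w ∈ ℝ^N. Suppose that for every x ∈ Ω the N vectors f_n(x) ⊕ Df_n(x)ᵀ(F(x)F(x)ᵀ)⁻¹F(x)w, n = 1,…,N, span ℝ^M ⊕ ℝ^P, where Df_n(x) is the M×P Jacobian matrix of f_n at x. Then there is no δ > 0 and no continuously differentiable curve x : (−δ, δ) → Ω with ẋ(0) ≠ 0 such that (I − Fᵀ(x(t))(F(x(t))Fᵀ(x(t)))⁻¹F(x(t)))w = 0 for all t ∈ (−δ, δ); that is, the zero set {x ∈ Ω : (I − Fᵀ(x)(F(x)Fᵀ(x))⁻¹F(x))w = 0} contains no nonconstant smooth curve. -/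
/-!
Along such a curve the vector `u(t) = (F Fᵀ)⁻¹ F w` (taken at `γ t`) satisfies
`Fᵀ(γ t) u(t) = w`, and `u` is differentiable because spanning columns make `F Fᵀ` invertible.
Differentiating `Σₘ F_{mn}(γ t) uₘ(t) = wₙ` at `t = 0` gives
`⟨fₙ, u'(0)⟩ + ⟨Dfₙᵀ u(0), γ'(0)⟩ = 0` for every `n`, so `(u'(0), γ'(0))` is orthogonal to
vectors spanning `ℝ^M ⊕ ℝ^P`, hence zero; in particular `γ'(0) = 0`.
-/

open Matrix Filter Topology

section Differentiability

variable {𝕜 E : Type*} [NontriviallyNormedField 𝕜] [NormedAddCommGroup E] [NormedSpace 𝕜 E]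
  {l m n : Type*} [Fintype m] {x : E}

theorem Matrix.differentiableAt_mul_apply {A : E → Matrix l m 𝕜} {B : E → Matrix m n 𝕜}
    (hA : ∀ i j, DifferentiableAt 𝕜 (fun y => A y i j) x)
    (hB : ∀ i j, DifferentiableAt 𝕜 (fun y => B y i j) x) (i : l) (k : n) :
    DifferentiableAt 𝕜 (fun y => (A y * B y) i k) x := by
  simp only [mul_apply]
  exact .fun_sum fun j _ => (hA i j).mul (hB j k)

theorem Matrix.differentiableAt_mulVec_apply {A : E → Matrix l m 𝕜} {v : E → m → 𝕜}
    (hA : ∀ i j, DifferentiableAt 𝕜 (fun y => A y i j) x)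
    (hv : ∀ j, DifferentiableAt 𝕜 (fun y => v y j) x) (i : l) :
    DifferentiableAt 𝕜 (fun y => (A y *ᵥ v y) i) x := by
  simp only [mulVec, dotProduct]
  exact .fun_sum fun j _ => (hA i j).mul (hv j)

theorem Matrix.differentiableAt_det [DecidableEq m] {A : E → Matrix m m 𝕜}
    (hA : ∀ i j, DifferentiableAt 𝕜 (fun y => A y i j) x) :
    DifferentiableAt 𝕜 (fun y => (A y).det) x := by
  simp only [det_apply']
  exact .fun_sum fun σ _ =>
    (HasFDerivAt.finsetProd fun i _ => (hA (σ i) i).hasFDerivAt).differentiableAt.const_mul _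

theorem Matrix.differentiableAt_inv_apply [DecidableEq m] {A : E → Matrix m m 𝕜}
    (hA : ∀ i j, DifferentiableAt 𝕜 (fun y => A y i j) x) (hdet : (A x).det ≠ 0) (i j : m) :
    DifferentiableAt 𝕜 (fun y => (A y)⁻¹ i j) x := by
  have hadj : DifferentiableAt 𝕜 (fun y => (A y).adjugate i j) x := by
    simp only [adjugate_apply]
    refine differentiableAt_det fun k l => ?_
    by_cases hk : k = j
    · simp [hk]
    · simpa [updateRow_ne hk] using hA k l
  simp only [inv_def, smul_apply, Ring.inverse_eq_inv', smul_eq_mul]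
  exact ((differentiableAt_det hA).inv hdet).mul hadj

theorem Matrix.hasDerivAt_vecMul_apply {A : 𝕜 → Matrix m n 𝕜} {A' : Matrix m n 𝕜}
    {u : 𝕜 → m → 𝕜} {u' : m → 𝕜} {t : 𝕜}
    (hA : ∀ i j, HasDerivAt (fun s => A s i j) (A' i j) t)
    (hu : ∀ i, HasDerivAt (fun s => u s i) (u' i) t) (j : n) :
    HasDerivAt (fun s => (u s ᵥ* A s) j) ((u t ᵥ* A') j + (u' ᵥ* A t) j) t := by
  simp only [vecMul, dotProduct, ← Finset.sum_add_distrib]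
  exact .fun_sum fun i _ => by simpa only [add_comm] using (hu i).fun_mul (hA i j)

end Differentiability

section LinearAlgebra

variable {R ι m n p : Type*}

theorem Matrix.isUnit_mul_transpose_of_span_cols_eq_top [Field R] [LinearOrder R]
    [IsStrictOrderedRing R] [Fintype m] [DecidableEq m] [Fintype n] {G : Matrix m n R}
    (h : Submodule.span R (Set.range Gᵀ) = ⊤) : IsUnit (G * Gᵀ) := by
  rw [← mulVec_surjective_iff_isUnit, ← coe_mulVecLin, ← LinearMap.range_eq_top]
  apply Submodule.eq_top_of_finrank_eq
  rw [← rank, rank_self_mul_transpose, rank_eq_finrank_span_cols, col_def, h, finrank_top]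

theorem Matrix.one_sub_transpose_mul_mul_mulVec_eq_zero_iff [CommRing R] [Fintype m] [Fintype n]
    [DecidableEq n] (G : Matrix m n R) (B : Matrix m m R) (w : n → R) :
    (1 - Gᵀ * B * G) *ᵥ w = 0 ↔ (B *ᵥ (G *ᵥ w)) ᵥ* G = w := by
  rw [sub_mulVec, one_mulVec, sub_eq_zero, ← mulVec_mulVec, ← mulVec_mulVec, mulVec_transpose,
    eq_comm]

theorem Matrix.of_apply_single_mulVec [CommSemiring R] [TopologicalSpace R] [Fintype p]
    [DecidableEq p] (L : m → (p → R) →L[R] R) (v : p → R) :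
    (of fun i j => L i (Pi.single j 1)) *ᵥ v = fun i => L i v := by
  ext i
  conv_rhs => rw [← Finset.univ_sum_single v]
  simp only [mulVec, dotProduct, of_apply, map_sum]
  refine Finset.sum_congr rfl fun j _ => ?_
  rw [mul_comm, ← smul_eq_mul, ← map_smul, ← Pi.single_smul', smul_eq_mul, mul_one]

theorem Matrix.eq_zero_of_forall_dotProduct_add_dotProduct_eq_zero [CommRing R] [LinearOrder R]
    [IsStrictOrderedRing R] [Fintype m] [Fintype p] {v : ι → (m → R) × (p → R)}
    (hv : Submodule.span R (Set.range v) = ⊤) {x : m → R} {y : p → R}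
    (h : ∀ i, (v i).1 ⬝ᵥ x + (v i).2 ⬝ᵥ y = 0) : x = 0 ∧ y = 0 := by
  let φ : (m → R) × (p → R) →ₗ[R] R :=
    ((dotProductBilin R R).flip x).coprod ((dotProductBilin R R).flip y)
  have hφ : φ = 0 := LinearMap.ext_on_range hv h
  have hxy : x ⬝ᵥ x + y ⬝ᵥ y = 0 := LinearMap.congr_fun hφ (x, y)
  obtain ⟨hx, hy⟩ := (add_eq_zero_iff_of_nonneg (Finset.sum_nonneg fun i _ => mul_self_nonneg (x i))
    (Finset.sum_nonneg fun i _ => mul_self_nonneg (y i))).1 hxy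
  exact ⟨dotProduct_self_eq_zero.1 hx, dotProduct_self_eq_zero.1 hy⟩

end LinearAlgebra

/-- Theorem 2 of the paper: Let `Ω ⊆ ℝ^P` be open, let `F : Ω → ℝ^{M×N}` be
entrywise `C¹` with columns `f₁(x),…,f_N(x)` spanning `ℝ^M` for every `x ∈ Ω`, and let
`w ∈ ℝ^N`.  If for every `x ∈ Ω` the `N` vectors
`f_n(x) ⊕ Df_n(x)ᵀ(F(x)F(x)ᵀ)⁻¹F(x)w` span `ℝ^M ⊕ ℝ^P` (where `Df_n(x)` is the `M × P`
Jacobian of the `n`-th column, taken entrywise), then there is no nonconstant `C¹` curve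
`γ : (−δ, δ) → Ω` with `γ̇(0) ≠ 0` lying in the zero set
`{x ∈ Ω : (I − Fᵀ(x)(F(x)Fᵀ(x))⁻¹F(x))w = 0}` of the error function. -/
theorem stmt13 {P M N : ℕ} {Ω : Set (Fin P → ℝ)} (hΩ : IsOpen Ω)
    (F : (Fin P → ℝ) → Matrix (Fin M) (Fin N) ℝ)
    (hF : ∀ i j, ContDiffOn ℝ 1 (fun x => F x i j) Ω)
    (hspan : ∀ x ∈ Ω,
      Submodule.span ℝ (Set.range (fun n : Fin N => fun m : Fin M => F x m n)) = ⊤)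
    (w : Fin N → ℝ)
    (hframe : ∀ x ∈ Ω,
      Submodule.span ℝ (Set.range (fun n : Fin N =>
        (((fun m : Fin M => F x m n),
          (Matrix.of fun (m : Fin M) (p : Fin P) =>
              fderiv ℝ (fun y => F y m n) x (Pi.single p 1))ᵀ *ᵥ
            ((F x * (F x)ᵀ)⁻¹ *ᵥ (F x *ᵥ w))) : (Fin M → ℝ) × (Fin P → ℝ)))) = ⊤) :
    ¬ ∃ δ : ℝ, 0 < δ ∧ ∃ γ : ℝ → Fin P → ℝ,
        ContDiffOn ℝ 1 γ (Set.Ioo (-δ) δ) ∧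
        (∀ t ∈ Set.Ioo (-δ) δ, γ t ∈ Ω) ∧
        deriv γ 0 ≠ 0 ∧
        ∀ t ∈ Set.Ioo (-δ) δ,
          (1 - (F (γ t))ᵀ * (F (γ t) * (F (γ t))ᵀ)⁻¹ * F (γ t)) *ᵥ w = 0 := by
  rintro ⟨δ, hδ, γ, hγ, hγΩ, hγ'0, hzero⟩
  have h0 : Set.Ioo (-δ) δ ∈ 𝓝 (0 : ℝ) := Ioo_mem_nhds (neg_neg_iff_pos.2 hδ) hδ
  have hx : γ 0 ∈ Ω := hγΩ 0 (mem_of_mem_nhds h0)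
  have hγd : HasDerivAt γ (deriv γ 0) 0 :=
    ((hγ.contDiffAt h0).differentiableAt one_ne_zero).hasDerivAt
  have hFγ : ∀ i j, HasDerivAt (fun t => F (γ t) i j)
      (fderiv ℝ (fun y => F y i j) (γ 0) (deriv γ 0)) 0 := fun i j =>
    (((hF i j).contDiffAt (hΩ.mem_nhds hx)).differentiableAt one_ne_zero).hasFDerivAt
      |>.comp_hasDerivAt 0 hγd
  set u : ℝ → Fin M → ℝ := fun t => (F (γ t) * (F (γ t))ᵀ)⁻¹ *ᵥ (F (γ t) *ᵥ w)
  have hdet : (F (γ 0) * (F (γ 0))ᵀ).det ≠ 0 :=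
    ((isUnit_iff_isUnit_det _).1 (isUnit_mul_transpose_of_span_cols_eq_top (hspan _ hx))).ne_zero
  have hu : ∀ i, DifferentiableAt ℝ (fun t => u t i) 0 :=
    have hFγd i j := (hFγ i j).differentiableAt
    differentiableAt_mulVec_apply
      (differentiableAt_inv_apply
        (differentiableAt_mul_apply (B := fun t => (F (γ t))ᵀ) hFγd fun i j => hFγd j i) hdet)
      (differentiableAt_mulVec_apply (v := fun _ => w) hFγd fun _ => differentiableAt_const _)
  have hconstraint : ∀ᶠ t in 𝓝 0, u t ᵥ* F (γ t) = w :=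
    eventually_of_mem h0 fun t ht =>
      (one_sub_transpose_mul_mul_mulVec_eq_zero_iff _ _ _).1 (hzero t ht)
  have hderiv n := (hasDerivAt_vecMul_apply hFγ (fun i => (hu i).hasDerivAt) n).unique
    ((hasDerivAt_const 0 (w n)).congr_of_eventuallyEq (hconstraint.mono fun t ht => congrFun ht n))
  refine hγ'0 (eq_zero_of_forall_dotProduct_add_dotProduct_eq_zero (hframe _ hx)
    (x := fun i => deriv (fun t => u t i) 0) fun n => ?_).2
  rw [mulVec_transpose, ← dotProduct_mulVec,
    of_apply_single_mulVec fun m => fderiv ℝ (fun y => F y m n) (γ 0),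
    dotProduct_comm _ (fun i => deriv (fun t => u t i) 0), add_comm]
  exact hderiv n
end

section
/- Let Ω ⊆ ℝ^M be open, let φ₁,…,φ_N ∈ C²(Ω), let F(x) be the M×N matrix whose n-th column is ∇φ_n(x), and let w : [t₀, t₁] → ℝ^N be continuously differentiable. Define the functional Ê(x) := ∫_{t₀}^{t₁} ‖Fᵀ(x(t))ẋ(t) − w(t)‖² dt on curves x ∈ C¹([t₀, t₁], Ω). If x ∈ C¹([t₀, t₁], Ω) minimizes Ê, i.e. Ê(x) ≤ Ê(y) for all y ∈ C¹([t₀, t₁], Ω), then x satisfies the Euler–Lagrange equation F(x(t)) (d/dt)[Fᵀ(x(t))ẋ(t) − w(t)] = 0 for all t ∈ [t₀, t₁]. -/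
/-!
Perturb the minimiser to `x + ε h`. Minimality at `ε = 0` and differentiation under the
integral give the weak Euler–Lagrange equation
`∫ ⟨g, D²Φ(x)(h, ẋ) + DΦ(x) ḣ⟩ = 0` for the residual `g := Fᵀ(x)ẋ - w` and `Φ := (φₙ)ₙ`.
Since the endpoints are free, taking `h = ρ v` and applying the du Bois-Reymond lemma shows
that `t ↦ ⟨g, DΦ(x) v⟩` is differentiable with derivative `⟨g, D²Φ(x)(v, ẋ)⟩`. Where `g` is
differentiable, the product rule computes the same derivative as
`⟨ġ, DΦ(x) v⟩ + ⟨g, D²Φ(x)(ẋ, v)⟩`; by symmetry of second derivatives the second terms cancel,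
so `⟨F(x) ġ, v⟩ = 0` for every `v`. Where `g` is not differentiable, `derivWithin` is `0`.
-/

open Matrix

/-- The `M × N` matrix whose `n`-th column is the gradient `∇φ_n(x)` (entries are the
directional derivatives of `φ_n` along the standard basis vectors). -/
noncomputable def synthesisMat {M N : ℕ} (φ : Fin N → (Fin M → ℝ) → ℝ) (x : Fin M → ℝ) :
    Matrix (Fin M) (Fin N) ℝ :=
  Matrix.of fun m n => fderiv ℝ (φ n) x (Pi.single m 1)

/-- The functional `Ê(y) := ∫_{t₀}^{t₁} ‖Fᵀ(y(t))ẏ(t) − w(t)‖² dt`, with the squared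
Euclidean norm written via the dot product and `ẏ` the time derivative on `[t₀, t₁]`. -/
noncomputable def funcE {M N : ℕ} (φ : Fin N → (Fin M → ℝ) → ℝ) (w : ℝ → Fin N → ℝ)
    (t₀ t₁ : ℝ) (y : ℝ → Fin M → ℝ) : ℝ :=
  ∫ t in t₀..t₁,
    ((synthesisMat φ (y t))ᵀ *ᵥ derivWithin y (Set.Icc t₀ t₁) t - w t) ⬝ᵥ
      ((synthesisMat φ (y t))ᵀ *ᵥ derivWithin y (Set.Icc t₀ t₁) t - w t)

open Set MeasureTheory intervalIntegral Metric

lemma eqOn_zero_of_intervalIntegral_eq_zero {f : ℝ → ℝ} {a b : ℝ} (hab : a < b)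
    (hf : ContinuousOn f (Icc a b)) (hf₀ : ∀ t ∈ Icc a b, 0 ≤ f t)
    (h : ∫ t in a..b, f t = 0) : EqOn f 0 (Icc a b) := by
  have hfi : IntervalIntegrable f volume a b :=
    (hf.mono (uIcc_of_le hab.le).subset).intervalIntegrable
  have hnonneg : 0 ≤ᵐ[volume.restrict (Ioc a b)] f :=
    (ae_restrict_mem measurableSet_Ioc).mono fun t ht => hf₀ t (Ioc_subset_Icc_self ht)
  have hae := (integral_eq_zero_iff_of_le_of_nonneg_ae hab.le hnonneg hfi).1 h
  rw [Measure.restrict_congr_set Ioc_ae_eq_Icc] at hae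
  exact Measure.eqOn_Icc_of_ae_eq volume hab.ne hae hf continuousOn_const

lemma hasDerivWithinAt_integral_Icc {f : ℝ → ℝ} {a b : ℝ} (hf : ContinuousOn f (Icc a b))
    {t : ℝ} (ht : t ∈ Icc a b) :
    HasDerivWithinAt (fun s => ∫ τ in a..s, f τ) (f t) (Icc a b) t := by
  have : Fact (t ∈ Icc a b) := ⟨ht⟩
  exact integral_hasDerivWithinAt_right
    ((hf.mono ((uIcc_of_le ht.1).trans_subset (Icc_subset_Icc_right ht.2))).intervalIntegrable)
    (hf.stronglyMeasurableAtFilter_nhdsWithin measurableSet_Icc t) (hf t ht)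

lemma contDiffOn_integral_Icc {f : ℝ → ℝ} {a b : ℝ} (hab : a < b)
    (hf : ContinuousOn f (Icc a b)) :
    ContDiffOn ℝ 1 (fun s => ∫ τ in a..s, f τ) (Icc a b) := by
  have hUD := uniqueDiffOn_Icc hab
  rw [show (1 : WithTop ℕ∞) = 0 + 1 from rfl, contDiffOn_succ_iff_derivWithin hUD]
  refine ⟨fun t ht => (hasDerivWithinAt_integral_Icc hf ht).differentiableWithinAt,
    by simp, contDiffOn_zero.2 (hf.congr fun t ht => ?_)⟩
  exact (hasDerivWithinAt_integral_Icc hf ht).derivWithin (hUD t ht)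

theorem integral_mul_add_derivWithin_mul_eq {a b ρ : ℝ → ℝ} {t₀ t₁ : ℝ} (ht : t₀ < t₁)
    (ha : ContinuousOn a (Icc t₀ t₁)) (hb : ContinuousOn b (Icc t₀ t₁))
    (hρ : ContDiffOn ℝ 1 ρ (Icc t₀ t₁)) :
    ∫ t in t₀..t₁, (ρ t * a t + derivWithin ρ (Icc t₀ t₁) t * b t)
      = ρ t₁ * (∫ t in t₀..t₁, a t)
        + ∫ t in t₀..t₁, derivWithin ρ (Icc t₀ t₁) t * (b t - ∫ τ in t₀..t, a τ) := by
  set I := Icc t₀ t₁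
  set A : ℝ → ℝ := fun s => ∫ τ in t₀..s, a τ
  have hI : uIcc t₀ t₁ = I := uIcc_of_le ht.le
  have hA : ∀ t ∈ I, HasDerivWithinAt A (a t) I t := fun t ht =>
    hasDerivWithinAt_integral_Icc ha ht
  have hAc : ContinuousOn A I := fun t ht => (hA t ht).continuousWithinAt
  have hρ' : ContinuousOn (derivWithin ρ I) I :=
    hρ.continuousOn_derivWithin (uniqueDiffOn_Icc ht) le_rfl
  have hparts : ∫ t in t₀..t₁, (derivWithin ρ I t * A t + ρ t * a t) = ρ t₁ * A t₁ := by
    rw [integral_deriv_mul_eq_sub_of_hasDerivWithinAt (v := A)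
      (by rw [hI]; exact fun t ht => ((hρ.differentiableOn one_ne_zero) t ht).hasDerivWithinAt)
      (by rw [hI]; exact hA)
      (hρ'.intervalIntegrable_of_Icc ht.le) (ha.intervalIntegrable_of_Icc ht.le)]
    simp [A]
  have h₁ : IntervalIntegrable (fun t => derivWithin ρ I t * A t + ρ t * a t) volume t₀ t₁ :=
    ((hρ'.mul hAc).add (hρ.continuousOn.mul ha)).intervalIntegrable_of_Icc ht.le
  have h₂ : IntervalIntegrable (fun t => derivWithin ρ I t * (b t - A t)) volume t₀ t₁ :=
    (hρ'.mul (hb.sub hAc)).intervalIntegrable_of_Icc ht.le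
  rw [← hparts, ← integral_add h₁ h₂]
  congr 1 with t
  ring

theorem hasDerivWithinAt_of_integral_mul_add_derivWithin_mul_eq_zero {a b : ℝ → ℝ}
    {t₀ t₁ : ℝ} (ht : t₀ < t₁) (ha : ContinuousOn a (Icc t₀ t₁))
    (hb : ContinuousOn b (Icc t₀ t₁))
    (h : ∀ ρ : ℝ → ℝ, ContDiffOn ℝ 1 ρ (Icc t₀ t₁) →
      ∫ t in t₀..t₁, (ρ t * a t + derivWithin ρ (Icc t₀ t₁) t * b t) = 0) :
    ∀ t ∈ Icc t₀ t₁, HasDerivWithinAt b (a t) (Icc t₀ t₁) t := by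
  set I := Icc t₀ t₁
  set A : ℝ → ℝ := fun s => ∫ τ in t₀..s, a τ
  have hA : ∀ t ∈ I, HasDerivWithinAt A (a t) I t := fun t ht =>
    hasDerivWithinAt_integral_Icc ha ht
  have hψc : ContinuousOn (fun t => b t - A t) I :=
    hb.sub fun t ht => (hA t ht).continuousWithinAt
  -- the constant test function `1` gives `∫ a = 0`
  have hA₁ : ∫ t in t₀..t₁, a t = 0 := by simpa using h (fun _ => 1) contDiffOn_const
  -- test against the primitive of `b - A` itself
  have hsq : ∫ t in t₀..t₁, (b t - A t) * (b t - A t) = 0 := by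
    have hρ := contDiffOn_integral_Icc ht hψc
    rw [← h _ hρ, integral_mul_add_derivWithin_mul_eq ht ha hb hρ, hA₁, mul_zero, zero_add]
    refine integral_congr fun t ht' => ?_
    rw [uIcc_of_le ht.le] at ht'
    rw [(hasDerivWithinAt_integral_Icc hψc ht').derivWithin (uniqueDiffOn_Icc ht t ht')]
  have hbA : EqOn b A I := fun t ht' => sub_eq_zero.1 <| mul_self_eq_zero.1 <|
    eqOn_zero_of_intervalIntegral_eq_zero ht (hψc.mul hψc) (fun t _ => mul_self_nonneg _) hsq ht'
  exact fun t ht' => (hA t ht').congr hbA (hbA ht')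

theorem hasDerivAt_intervalIntegral_of_continuousOn {E : Type*} [NormedAddCommGroup E]
    [NormedSpace ℝ E] {G G' : ℝ → ℝ → E} {a b ε₀ δ : ℝ} (hδ : 0 < δ)
    (hG : ContinuousOn (Function.uncurry G) (closedBall ε₀ δ ×ˢ uIcc a b))
    (hG' : ContinuousOn (Function.uncurry G') (closedBall ε₀ δ ×ˢ uIcc a b))
    (hderiv : ∀ t ∈ uIcc a b, ∀ ε ∈ closedBall ε₀ δ, HasDerivAt (G · t) (G' ε t) ε) :
    HasDerivAt (fun ε => ∫ t in a..b, G ε t) (∫ t in a..b, G' ε₀ t) ε₀ := by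
  obtain ⟨C, hC⟩ :=
    ((isCompact_closedBall ε₀ δ).prod isCompact_uIcc).exists_bound_of_continuousOn hG'
  have hslice : ∀ {F : ℝ → ℝ → E},
      ContinuousOn (Function.uncurry F) (closedBall ε₀ δ ×ˢ uIcc a b) →
      ∀ ε ∈ closedBall ε₀ δ, ContinuousOn (F ε) (uIcc a b) := fun hF ε hε =>
    hF.comp (f := fun t => (ε, t)) (Continuous.continuousOn (by fun_prop)) fun _ ht => ⟨hε, ht⟩
  refine (hasDerivAt_integral_of_dominated_loc_of_deriv_le (bound := fun _ => C)
    (ball_mem_nhds ε₀ hδ) ?_ (hslice hG ε₀ (mem_closedBall_self hδ.le)).intervalIntegrable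
    (((hslice hG' ε₀ (mem_closedBall_self hδ.le)).mono uIoc_subset_uIcc).aestronglyMeasurable
      measurableSet_uIoc)
    (ae_of_all _ fun t ht ε hε => hC (ε, t) ⟨ball_subset_closedBall hε, uIoc_subset_uIcc ht⟩)
    intervalIntegrable_const
    (ae_of_all _ fun t ht ε hε =>
      hderiv t (uIoc_subset_uIcc ht) ε (ball_subset_closedBall hε))).2
  filter_upwards [ball_mem_nhds ε₀ hδ] with ε hε
  exact ((hslice hG ε (ball_subset_closedBall hε)).mono uIoc_subset_uIcc).aestronglyMeasurable
    measurableSet_uIoc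

theorem exists_pos_forall_add_smul_mem {α E : Type*} [TopologicalSpace α]
    [NormedAddCommGroup E] [NormedSpace ℝ E] {s : Set α} {Ω : Set E} {x h : α → E}
    (hs : IsCompact s) (hΩ : IsOpen Ω) (hx : ContinuousOn x s) (hh : ContinuousOn h s)
    (hxΩ : MapsTo x s Ω) :
    ∃ δ > 0, ∀ ε ∈ closedBall (0 : ℝ) δ, ∀ t ∈ s, x t + ε • h t ∈ Ω := by
  obtain ⟨r, hr, hrΩ⟩ :=
    (hs.image_of_continuousOn hx).exists_thickening_subset_open hΩ (mapsTo_iff_image_subset.1 hxΩ)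
  obtain ⟨R, hR⟩ := hs.exists_bound_of_continuousOn hh
  refine ⟨r / (|R| + 1), by positivity, fun ε hε t ht => hrΩ ?_⟩
  rw [mem_closedBall_zero_iff] at hε
  refine mem_thickening_iff.2 ⟨x t, mem_image_of_mem x ht, ?_⟩
  rw [dist_eq_norm, add_sub_cancel_left, norm_smul]
  calc ‖ε‖ * ‖h t‖ ≤ r / (|R| + 1) * |R| :=
        mul_le_mul hε ((hR t ht).trans (le_abs_self R)) (norm_nonneg _) (by positivity)
    _ < r := by
        have : 0 < |R| + 1 := by positivity
        rw [div_mul_eq_mul_div, div_lt_iff₀ this]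
        linarith

theorem hasDerivAt_fderiv_add_smul_apply_add_smul {E F : Type*} [NormedAddCommGroup E]
    [NormedSpace ℝ E] [NormedAddCommGroup F] [NormedSpace ℝ F] {f : E → F} {p h d k : E}
    {ε : ℝ} (hf : DifferentiableAt ℝ (fderiv ℝ f) (p + ε • h)) :
    HasDerivAt (fun e : ℝ => fderiv ℝ f (p + e • h) (d + e • k))
      (fderiv ℝ (fderiv ℝ f) (p + ε • h) h (d + ε • k) + fderiv ℝ f (p + ε • h) k) ε := by
  have hp : HasDerivAt (fun e : ℝ => p + e • h) h ε :=
    ((hasDerivAt_id ε).smul_const h).const_add p |>.congr_deriv (one_smul ℝ h)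
  have hd : HasDerivAt (fun e : ℝ => d + e • k) k ε :=
    ((hasDerivAt_id ε).smul_const k).const_add d |>.congr_deriv (one_smul ℝ k)
  exact HasDerivAt.clm_apply (c := fun e : ℝ => fderiv ℝ f (p + e • h))
    (u := fun e : ℝ => d + e • k) (hf.hasFDerivAt.comp_hasDerivAt ε hp) hd

theorem ContinuousOn.comp_snd {α β γ : Type*} [TopologicalSpace α] [TopologicalSpace β]
    [TopologicalSpace γ] {f : β → γ} {s : Set α} {t : Set β} (hf : ContinuousOn f t) :
    ContinuousOn (fun p : α × β => f p.2) (s ×ˢ t) :=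
  hf.comp continuous_snd.continuousOn fun _ hp => hp.2

section Energy

variable {E ι : Type*} [NormedAddCommGroup E] [NormedSpace ℝ E]

/-- `Fᵀ(y(t)) ẏ(t) - w(t)` in coordinate-free form: the `n`-th entry of `Fᵀ(y) ẏ` is
`Dφₙ(y) ẏ`. -/
noncomputable def analysisResidual (φ : ι → E → ℝ) (w : ℝ → ι → ℝ) (t₀ t₁ : ℝ) (y : ℝ → E)
    (t : ℝ) : ι → ℝ :=
  fun n => fderiv ℝ (φ n) (y t) (derivWithin y (Icc t₀ t₁) t) - w t n

noncomputable def energy [Fintype ι] (φ : ι → E → ℝ) (w : ℝ → ι → ℝ) (t₀ t₁ : ℝ)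
    (y : ℝ → E) : ℝ :=
  ∫ t in t₀..t₁, ∑ n, analysisResidual φ w t₀ t₁ y t n ^ 2

variable {Ω : Set E} {φ : ι → E → ℝ} {w : ℝ → ι → ℝ} {t₀ t₁ : ℝ} {x : ℝ → E}

theorem continuousOn_analysisResidual (hΩ : IsOpen Ω) (hφ : ∀ n, ContDiffOn ℝ 1 (φ n) Ω)
    (ht : t₀ < t₁) (hw : ContinuousOn w (Icc t₀ t₁)) (hx : ContDiffOn ℝ 1 x (Icc t₀ t₁))
    (hxΩ : MapsTo x (Icc t₀ t₁) Ω) : ContinuousOn (analysisResidual φ w t₀ t₁ x) (Icc t₀ t₁) :=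
  continuousOn_pi.2 fun n =>
    ((((hφ n).continuousOn_fderiv_of_isOpen hΩ le_rfl).comp hx.continuousOn hxΩ).clm_apply
      (hx.continuousOn_derivWithin (uniqueDiffOn_Icc ht) le_rfl)).sub
      ((continuous_apply n).comp_continuousOn hw)

theorem energy_add_smul [Fintype ι] (ht : t₀ < t₁) (hx : ContDiffOn ℝ 1 x (Icc t₀ t₁))
    {h : ℝ → E} (hh : ContDiffOn ℝ 1 h (Icc t₀ t₁)) (ε : ℝ) :
    energy φ w t₀ t₁ (fun t => x t + ε • h t) = ∫ t in t₀..t₁, ∑ n,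
      (fderiv ℝ (φ n) (x t + ε • h t)
        (derivWithin x (Icc t₀ t₁) t + ε • derivWithin h (Icc t₀ t₁) t) - w t n) ^ 2 := by
  refine integral_congr fun t ht' => ?_
  rw [uIcc_of_le ht.le] at ht'
  have hd : HasDerivWithinAt (fun t => x t + ε • h t)
      (derivWithin x (Icc t₀ t₁) t + ε • derivWithin h (Icc t₀ t₁) t) (Icc t₀ t₁) t :=
    ((hx.differentiableOn one_ne_zero) t ht').hasDerivWithinAt.add
      (((hh.differentiableOn one_ne_zero) t ht').hasDerivWithinAt.const_smul ε)
  simp only [analysisResidual, hd.derivWithin (uniqueDiffOn_Icc ht t ht')]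

theorem hasDerivAt_integral_sum_sq_fderiv_add_smul [Fintype ι] (hΩ : IsOpen Ω)
    (hφ : ∀ n, ContDiffOn ℝ 2 (φ n) Ω) (hw : ContinuousOn w (uIcc t₀ t₁)) {h d k : ℝ → E}
    (hx : ContinuousOn x (uIcc t₀ t₁)) (hh : ContinuousOn h (uIcc t₀ t₁))
    (hd : ContinuousOn d (uIcc t₀ t₁)) (hk : ContinuousOn k (uIcc t₀ t₁))
    (hxΩ : MapsTo x (uIcc t₀ t₁) Ω) :
    HasDerivAt
      (fun ε : ℝ => ∫ t in t₀..t₁, ∑ n,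
        (fderiv ℝ (φ n) (x t + ε • h t) (d t + ε • k t) - w t n) ^ 2)
      (∫ t in t₀..t₁, ∑ n, 2 * (fderiv ℝ (φ n) (x t) (d t) - w t n) *
        (fderiv ℝ (fderiv ℝ (φ n)) (x t) (h t) (d t) + fderiv ℝ (φ n) (x t) (k t))) 0 := by
  obtain ⟨δ, hδ, hδΩ⟩ := exists_pos_forall_add_smul_mem isCompact_uIcc hΩ hx hh hxΩ
  set K := closedBall (0 : ℝ) δ ×ˢ uIcc t₀ t₁
  set R : ℝ → ℝ → ι → ℝ := fun ε t n =>
    fderiv ℝ (φ n) (x t + ε • h t) (d t + ε • k t) - w t n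
  set R' : ℝ → ℝ → ι → ℝ := fun ε t n =>
    fderiv ℝ (fderiv ℝ (φ n)) (x t + ε • h t) (h t) (d t + ε • k t)
      + fderiv ℝ (φ n) (x t + ε • h t) (k t)
  have hDφ : ∀ n, ContDiffOn ℝ 1 (fderiv ℝ (φ n)) Ω := fun n =>
    (hφ n).fderiv_of_isOpen hΩ (by norm_num)
  have hz : ContinuousOn (fun p : ℝ × ℝ => x p.2 + p.1 • h p.2) K :=
    hx.comp_snd.add (continuousOn_fst.smul hh.comp_snd)
  have hzΩ : MapsTo (fun p : ℝ × ℝ => x p.2 + p.1 • h p.2) K Ω := fun p hp =>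
    hδΩ p.1 hp.1 p.2 hp.2
  have hdk : ContinuousOn (fun p : ℝ × ℝ => d p.2 + p.1 • k p.2) K :=
    hd.comp_snd.add (continuousOn_fst.smul hk.comp_snd)
  have hR : ∀ n, ContinuousOn (fun p : ℝ × ℝ => R p.1 p.2 n) K := fun n =>
    (((hDφ n).continuousOn.comp hz hzΩ).clm_apply hdk).sub
      ((continuous_apply n).comp_continuousOn hw).comp_snd
  have hR' : ∀ n, ContinuousOn (fun p : ℝ × ℝ => R' p.1 p.2 n) K := fun n =>
    (((((hDφ n).continuousOn_fderiv_of_isOpen hΩ le_rfl).comp hz hzΩ).clm_apply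
      hh.comp_snd).clm_apply hdk).add (((hDφ n).continuousOn.comp hz hzΩ).clm_apply hk.comp_snd)
  have hderiv : ∀ t ∈ uIcc t₀ t₁, ∀ ε ∈ closedBall (0 : ℝ) δ,
      HasDerivAt (fun e => ∑ n, R e t n ^ 2) (∑ n, 2 * R ε t n * R' ε t n) ε := by
    intro t ht ε hε
    refine HasDerivAt.fun_sum fun n _ => ?_
    have hdiff := ((hDφ n).differentiableOn one_ne_zero).differentiableAt
      (hΩ.mem_nhds (hδΩ ε hε t ht))
    exact (((hasDerivAt_fderiv_add_smul_apply_add_smul (d := d t) (k := k t) hdiff).sub_const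
      (w t n)).pow 2).congr_deriv (by simp only [R, R']; ring)
  simpa [R, R'] using hasDerivAt_intervalIntegral_of_continuousOn hδ
    (G := fun ε t => ∑ n, R ε t n ^ 2) (G' := fun ε t => ∑ n, 2 * R ε t n * R' ε t n)
    (continuousOn_finsetSum _ fun n _ => (hR n).pow 2)
    (continuousOn_finsetSum _ fun n _ => (continuousOn_const.mul (hR n)).mul (hR' n)) hderiv

theorem hasDerivAt_energy_add_smul [Fintype ι] (hΩ : IsOpen Ω)
    (hφ : ∀ n, ContDiffOn ℝ 2 (φ n) Ω) (ht : t₀ < t₁) (hw : ContinuousOn w (Icc t₀ t₁))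
    (hx : ContDiffOn ℝ 1 x (Icc t₀ t₁)) (hxΩ : MapsTo x (Icc t₀ t₁) Ω)
    {h : ℝ → E} (hh : ContDiffOn ℝ 1 h (Icc t₀ t₁)) :
    HasDerivAt (fun ε : ℝ => energy φ w t₀ t₁ (fun t => x t + ε • h t))
      (2 * ∫ t in t₀..t₁, ∑ n, analysisResidual φ w t₀ t₁ x t n *
        (fderiv ℝ (fderiv ℝ (φ n)) (x t) (h t) (derivWithin x (Icc t₀ t₁) t)
          + fderiv ℝ (φ n) (x t) (derivWithin h (Icc t₀ t₁) t))) 0 := by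
  have hUD := uniqueDiffOn_Icc ht
  have hI : uIcc t₀ t₁ = Icc t₀ t₁ := uIcc_of_le ht.le
  rw [funext (energy_add_smul (φ := φ) (w := w) ht hx hh)]
  refine (hasDerivAt_integral_sum_sq_fderiv_add_smul hΩ hφ (hI ▸ hw) (hI ▸ hx.continuousOn)
    (hI ▸ hh.continuousOn) (hI ▸ hx.continuousOn_derivWithin hUD le_rfl)
    (hI ▸ hh.continuousOn_derivWithin hUD le_rfl) (hI ▸ hxΩ)).congr_deriv ?_
  rw [← intervalIntegral.integral_const_mul]
  congr 1 with t
  rw [Finset.mul_sum]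
  exact Finset.sum_congr rfl fun n _ => by rw [analysisResidual]; ring

theorem integral_analysisResidual_mul_variation_eq_zero [Fintype ι] (hΩ : IsOpen Ω)
    (hφ : ∀ n, ContDiffOn ℝ 2 (φ n) Ω) (ht : t₀ < t₁) (hw : ContinuousOn w (Icc t₀ t₁))
    (hx : ContDiffOn ℝ 1 x (Icc t₀ t₁)) (hxΩ : MapsTo x (Icc t₀ t₁) Ω)
    (hmin : ∀ y, ContDiffOn ℝ 1 y (Icc t₀ t₁) → MapsTo y (Icc t₀ t₁) Ω →
      energy φ w t₀ t₁ x ≤ energy φ w t₀ t₁ y)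
    {h : ℝ → E} (hh : ContDiffOn ℝ 1 h (Icc t₀ t₁)) :
    ∫ t in t₀..t₁, ∑ n, analysisResidual φ w t₀ t₁ x t n *
      (fderiv ℝ (fderiv ℝ (φ n)) (x t) (h t) (derivWithin x (Icc t₀ t₁) t)
        + fderiv ℝ (φ n) (x t) (derivWithin h (Icc t₀ t₁) t)) = 0 := by
  obtain ⟨δ, hδ, hδΩ⟩ := exists_pos_forall_add_smul_mem isCompact_Icc hΩ hx.continuousOn
    hh.continuousOn hxΩ
  have hlocmin : IsLocalMin (fun ε : ℝ => energy φ w t₀ t₁ (fun t => x t + ε • h t)) 0 := by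
    filter_upwards [closedBall_mem_nhds (0 : ℝ) hδ] with ε hε
    simpa using hmin _ (hx.add (hh.const_smul ε)) fun t ht' => hδΩ ε hε t ht'
  simpa using hlocmin.hasDerivAt_eq_zero (hasDerivAt_energy_add_smul hΩ hφ ht hw hx hxΩ hh)

theorem hasDerivWithinAt_sum_analysisResidual_mul_fderiv [Fintype ι] (hΩ : IsOpen Ω)
    (hφ : ∀ n, ContDiffOn ℝ 2 (φ n) Ω) (ht : t₀ < t₁) (hw : ContinuousOn w (Icc t₀ t₁))
    (hx : ContDiffOn ℝ 1 x (Icc t₀ t₁)) (hxΩ : MapsTo x (Icc t₀ t₁) Ω)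
    (hmin : ∀ y, ContDiffOn ℝ 1 y (Icc t₀ t₁) → MapsTo y (Icc t₀ t₁) Ω →
      energy φ w t₀ t₁ x ≤ energy φ w t₀ t₁ y)
    (v : E) {t : ℝ} (ht' : t ∈ Icc t₀ t₁) :
    HasDerivWithinAt (fun s => ∑ n, analysisResidual φ w t₀ t₁ x s n * fderiv ℝ (φ n) (x s) v)
      (∑ n, analysisResidual φ w t₀ t₁ x t n *
        fderiv ℝ (fderiv ℝ (φ n)) (x t) v (derivWithin x (Icc t₀ t₁) t)) (Icc t₀ t₁) t := by
  have hUD : UniqueDiffOn ℝ (Icc t₀ t₁) := uniqueDiffOn_Icc ht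
  have hDφ : ∀ n, ContDiffOn ℝ 1 (fderiv ℝ (φ n)) Ω := fun n =>
    (hφ n).fderiv_of_isOpen hΩ (by norm_num)
  have hg := continuousOn_pi.1 <|
    continuousOn_analysisResidual hΩ (fun n => (hφ n).of_le one_le_two) ht hw hx hxΩ
  refine hasDerivWithinAt_of_integral_mul_add_derivWithin_mul_eq_zero ht
    (a := fun s => ∑ n, analysisResidual φ w t₀ t₁ x s n *
      fderiv ℝ (fderiv ℝ (φ n)) (x s) v (derivWithin x (Icc t₀ t₁) s))
    (b := fun s => ∑ n, analysisResidual φ w t₀ t₁ x s n * fderiv ℝ (φ n) (x s) v)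
    (continuousOn_finsetSum _ fun n _ => (hg n).mul
      (((((hDφ n).continuousOn_fderiv_of_isOpen hΩ le_rfl).comp hx.continuousOn hxΩ).clm_apply
        continuousOn_const).clm_apply (hx.continuousOn_derivWithin hUD le_rfl)))
    (continuousOn_finsetSum _ fun n _ => (hg n).mul
      (((hDφ n).continuousOn.comp hx.continuousOn hxΩ).clm_apply continuousOn_const))
    (fun ρ hρ => ?_) t ht'
  rw [← integral_analysisResidual_mul_variation_eq_zero hΩ hφ ht hw hx hxΩ hmin
    (h := fun s => ρ s • v) (hρ.smul contDiffOn_const)]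
  refine integral_congr fun s hs => ?_
  rw [uIcc_of_le ht.le] at hs
  rw [(((hρ.differentiableOn one_ne_zero) s hs).hasDerivWithinAt.smul_const v).derivWithin
    (hUD s hs)]
  simp only [map_smul, _root_.smul_apply, smul_eq_mul, Finset.mul_sum,
    ← Finset.sum_add_distrib]
  exact Finset.sum_congr rfl fun n _ => by ring

theorem sum_derivWithin_analysisResidual_mul_fderiv_eq_zero [Fintype ι] (hΩ : IsOpen Ω)
    (hφ : ∀ n, ContDiffOn ℝ 2 (φ n) Ω) (ht : t₀ < t₁) (hw : ContinuousOn w (Icc t₀ t₁))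
    (hx : ContDiffOn ℝ 1 x (Icc t₀ t₁)) (hxΩ : MapsTo x (Icc t₀ t₁) Ω)
    (hmin : ∀ y, ContDiffOn ℝ 1 y (Icc t₀ t₁) → MapsTo y (Icc t₀ t₁) Ω →
      energy φ w t₀ t₁ x ≤ energy φ w t₀ t₁ y)
    (v : E) {t : ℝ} (ht' : t ∈ Icc t₀ t₁) :
    ∑ n, derivWithin (analysisResidual φ w t₀ t₁ x) (Icc t₀ t₁) t n * fderiv ℝ (φ n) (x t) v
      = 0 := by
  set g := analysisResidual φ w t₀ t₁ x
  by_cases hdiff : DifferentiableWithinAt ℝ g (Icc t₀ t₁) t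
  swap
  · simp [derivWithin_zero_of_not_differentiableWithinAt hdiff]
  have hx' := ((hx.differentiableOn one_ne_zero) t ht').hasDerivWithinAt
  have hDφ : ∀ n, DifferentiableAt ℝ (fderiv ℝ (φ n)) (x t) := fun n =>
    (((hφ n).fderiv_of_isOpen hΩ (by norm_num) : ContDiffOn ℝ 1 _ Ω).differentiableOn
      one_ne_zero).differentiableAt (hΩ.mem_nhds (hxΩ ht'))
  have hprod : HasDerivWithinAt (fun s => ∑ n, g s n * fderiv ℝ (φ n) (x s) v)
      (∑ n, (derivWithin g (Icc t₀ t₁) t n * fderiv ℝ (φ n) (x t) v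
        + g t n * fderiv ℝ (fderiv ℝ (φ n)) (x t) (derivWithin x (Icc t₀ t₁) t) v))
      (Icc t₀ t₁) t :=
    HasDerivWithinAt.fun_sum fun n _ => (hasDerivWithinAt_pi.1 hdiff.hasDerivWithinAt n).mul
      ((((hDφ n).hasFDerivAt.comp_hasDerivWithinAt t hx').clm_apply
        (hasDerivWithinAt_const t _ v)).congr_deriv (by simp))
  have hEL := (uniqueDiffOn_Icc ht t ht').eq_deriv _ hprod
    (hasDerivWithinAt_sum_analysisResidual_mul_fderiv hΩ hφ ht hw hx hxΩ hmin v ht')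
  have hsymm : ∀ n, fderiv ℝ (fderiv ℝ (φ n)) (x t) (derivWithin x (Icc t₀ t₁) t) v
      = fderiv ℝ (fderiv ℝ (φ n)) (x t) v (derivWithin x (Icc t₀ t₁) t) := fun n =>
    ((hφ n).contDiffAt (hΩ.mem_nhds (hxΩ ht'))).isSymmSndFDerivAt (by simp) _ _
  simp only [Finset.sum_add_distrib, hsymm] at hEL
  linarith

end Energy

theorem synthesisMat_transpose_mulVec {M N : ℕ} (φ : Fin N → (Fin M → ℝ) → ℝ)
    (p d : Fin M → ℝ) : (synthesisMat φ p)ᵀ *ᵥ d = fun n => fderiv ℝ (φ n) p d := by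
  ext n
  conv_rhs => rw [← Finset.univ_sum_single d]
  simp only [mulVec, dotProduct, synthesisMat, transpose_apply, of_apply, mul_comm, map_sum]
  refine Finset.sum_congr rfl fun i _ => ?_
  rw [← smul_eq_mul, ← map_smul, ← Pi.single_smul, smul_eq_mul, mul_one]

theorem funcE_eq_energy {M N : ℕ} (φ : Fin N → (Fin M → ℝ) → ℝ) (w : ℝ → Fin N → ℝ)
    (t₀ t₁ : ℝ) (y : ℝ → Fin M → ℝ) : funcE φ w t₀ t₁ y = energy φ w t₀ t₁ y := by
  simp only [funcE, energy, analysisResidual, synthesisMat_transpose_mulVec, dotProduct, sq]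
  rfl

/-- Theorem 3 of the paper: Let `Ω ⊆ ℝ^M` be open, `φ₁,…,φ_N ∈ C²(Ω)`,
`F(x)` the `M × N` matrix with `n`-th column `∇φ_n(x)`, and `w : [t₀, t₁] → ℝ^N` of class
`C¹`.  If `x ∈ C¹([t₀, t₁], Ω)` minimizes `Ê` over `C¹([t₀, t₁], Ω)`, then `x` satisfies
the Euler–Lagrange equation `F(x(t)) (d/dt)[Fᵀ(x(t))ẋ(t) − w(t)] = 0` for all
`t ∈ [t₀, t₁]`. -/
theorem stmt15 {M N : ℕ} {Ω : Set (Fin M → ℝ)} (hΩ : IsOpen Ω)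
    (φ : Fin N → (Fin M → ℝ) → ℝ) (hφ : ∀ n, ContDiffOn ℝ 2 (φ n) Ω)
    (t₀ t₁ : ℝ) (ht : t₀ < t₁)
    (w : ℝ → Fin N → ℝ) (hw : ContDiffOn ℝ 1 w (Set.Icc t₀ t₁))
    (x : ℝ → Fin M → ℝ) (hx : ContDiffOn ℝ 1 x (Set.Icc t₀ t₁))
    (hxΩ : ∀ t ∈ Set.Icc t₀ t₁, x t ∈ Ω)
    (hmin : ∀ y : ℝ → Fin M → ℝ, ContDiffOn ℝ 1 y (Set.Icc t₀ t₁) →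
      (∀ t ∈ Set.Icc t₀ t₁, y t ∈ Ω) → funcE φ w t₀ t₁ x ≤ funcE φ w t₀ t₁ y) :
    ∀ t ∈ Set.Icc t₀ t₁,
      synthesisMat φ (x t) *ᵥ
        derivWithin
          (fun s => (synthesisMat φ (x s))ᵀ *ᵥ derivWithin x (Set.Icc t₀ t₁) s - w s)
          (Set.Icc t₀ t₁) t = 0 := by
  intro t ht'
  simp only [funcE_eq_energy] at hmin
  have hres : (fun s => (synthesisMat φ (x s))ᵀ *ᵥ derivWithin x (Icc t₀ t₁) s - w s)
      = analysisResidual φ w t₀ t₁ x := by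
    funext s
    rw [synthesisMat_transpose_mulVec]
    rfl
  ext m
  rw [hres, Pi.zero_apply, ← sum_derivWithin_analysisResidual_mul_fderiv_eq_zero hΩ hφ ht
    hw.continuousOn hx hxΩ hmin (Pi.single m 1) ht']
  simp [mulVec, dotProduct, synthesisMat, mul_comm]
end
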